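/- Fix δ ≥ −1 and for a > 1 set σ(a) := (8(a+δ))^{−1/2} and R(a) := sup_{x ∈ (0,1)} β_{a,a}(x)/φ_{1/2,σ(a)}(x). Then the function a ↦ log R(a) is strictly decreasing on (1,∞). -/

import Mathlib

open MeasureTheory

/-- The Beta function `B(a,b) = ∫₀¹ t^{a-1} (1-t)^{b-1} dt`. -/
noncomputable def betaFn (a b : ℝ) : ℝ :=
  ∫ t in (0:ℝ)..1, t ^ (a - 1) * (1 - t) ^ (b - 1)

/-- Density of the symmetric Beta(a,a) distribution on (0,1). -/
noncomputable def betaSymPDF (a t : ℝ) : ℝ :=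
  (betaFn a a)⁻¹ * t ^ (a - 1) * (1 - t) ^ (a - 1)

/-- Density of the normal distribution N(1/2, σ²). -/
noncomputable def gaussPDF (σ x : ℝ) : ℝ :=
  (Real.sqrt (2 * Real.pi * σ ^ 2))⁻¹ * Real.exp (-(x - 1 / 2) ^ 2 / (2 * σ ^ 2))

/-- `R(a) = sup_{x ∈ (0,1)} β_{a,a}(x) / φ_{1/2, σ(a)}(x)` with
`σ(a) = (8(a+δ))^{-1/2}`. -/
noncomputable def Rratio (δ a : ℝ) : ℝ :=
  ⨆ x : Set.Ioo (0:ℝ) 1, betaSymPDF a x / gaussPDF ((8 * (a + δ)) ^ (-(1:ℝ) / 2)) x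

/-!
Substituting `u = x(1-x)`, so that `(x - 1/2)² = 1/4 - u`, the ratio `β_{a,a}/φ` becomes a
constant times `exp((a-1) log u + 4(a+δ)(1/4 - u))`, which is maximal at
`u = (a-1)/(4(a+δ)) ≤ 1/4`.
Expressing `B(a,a)` through `Γ` and Legendre's duplication formula then gives
`log R(a) = Φ(a) - (a-1/2) log((a+δ)/(a-1/2)) + δ + 1` with
`Φ(t) = log Γ(t+1/2) - log Γ(t) + (t-1) log(t-1) - (t-1/2) log(t-1/2)`.
The middle term is nondecreasing in `a`, because `s ↦ s log(1 + d/s)` is. The function `Φ` tends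
to `-1/2` by log-convexity of `Γ`, and `Φ(t) - Φ(t+1) = k(t-1/2) - k(t-1)` with
`k(s) = s log(1 + 1/s)` is strictly decreasing; telescoping `Φ(a) - Φ(b)` along `a + n`, `b + n`
shows that `Φ` is strictly decreasing.
-/

open Real Set Filter Topology

lemma betaIntegral_ofReal (a b : ℝ) : Complex.betaIntegral a b = betaFn a b := by
  rw [Complex.betaIntegral, betaFn, ← intervalIntegral.integral_ofReal]
  refine intervalIntegral.integral_congr fun t ht => ?_
  rw [uIcc_of_le zero_le_one] at ht
  simp only [Complex.ofReal_mul, Complex.ofReal_cpow ht.1,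
    Complex.ofReal_cpow (sub_nonneg.2 ht.2), Complex.ofReal_sub, Complex.ofReal_one]

lemma betaFn_eq_beta {a b : ℝ} (ha : 0 < a) (hb : 0 < b) :
    betaFn a b = ProbabilityTheory.beta a b := by
  rw [ProbabilityTheory.beta_eq_betaIntegralReal a b ha hb, betaIntegral_ofReal,
    Complex.ofReal_re]

lemma betaFn_self_pos {a : ℝ} (ha : 0 < a) : 0 < betaFn a a :=
  betaFn_eq_beta ha ha ▸ ProbabilityTheory.beta_pos ha ha

lemma betaFn_self_eq {a : ℝ} (ha : 0 < a) :
    betaFn a a = 2 ^ (1 - 2 * a) * √π * Gamma a / Gamma (a + 1 / 2) := by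
  have hdup := Gamma_mul_Gamma_add_half a
  have h2a : Gamma (2 * a) ≠ 0 := (Gamma_pos_of_pos (by linarith)).ne'
  have hah : Gamma (a + 1 / 2) ≠ 0 := (Gamma_pos_of_pos (by linarith)).ne'
  rw [betaFn_eq_beta ha ha, ProbabilityTheory.beta, ← two_mul, div_eq_div_iff h2a hah]
  linear_combination Gamma a * hdup

lemma log_betaFn_self {a : ℝ} (ha : 0 < a) :
    log (betaFn a a) =
      (1 - 2 * a) * log 2 + log π / 2 + log (Gamma a) - log (Gamma (a + 1 / 2)) := by
  have hGa := Gamma_pos_of_pos ha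
  have hGah := Gamma_pos_of_pos (by linarith : 0 < a + 1 / 2)
  rw [betaFn_self_eq ha, log_div (by positivity) hGah.ne', log_mul (by positivity) hGa.ne',
    log_mul (by positivity) (by positivity), log_rpow two_pos, log_sqrt pi_pos.le]

lemma betaSymPDF_div_gaussPDF (a σ : ℝ) {x : ℝ} (hx : x ∈ Ioo (0 : ℝ) 1) :
    betaSymPDF a x / gaussPDF σ x = √(2 * π * σ ^ 2) / betaFn a a *
      exp ((a - 1) * log (x * (1 - x)) + (1 / 4 - x * (1 - x)) / (2 * σ ^ 2)) := by
  have h1x : 0 < 1 - x := sub_pos.2 hx.2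
  rw [betaSymPDF, gaussPDF, mul_assoc, ← mul_rpow hx.1.le h1x.le,
    rpow_def_of_pos (mul_pos hx.1 h1x), exp_add,
    show (x - 1 / 2) ^ 2 = 1 / 4 - x * (1 - x) by ring, neg_div, exp_neg]
  field_simp

lemma mul_log_sub_mul_le {p q u : ℝ} (hp : 0 < p) (hq : 0 < q) (hu : 0 < u) :
    p * log u - q * u ≤ p * log (p / q) - p := by
  have h := log_le_sub_one_of_pos (div_pos hu (div_pos hp hq))
  rw [log_div hu.ne' (div_pos hp hq).ne', div_div_eq_mul_div, le_sub_iff_add_le,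
    le_div_iff₀ hp] at h
  linarith

lemma exists_mem_Ioo_mul_one_sub_eq {u : ℝ} (hu : 0 < u) (hu' : u ≤ 1 / 4) :
    ∃ x ∈ Ioo (0 : ℝ) 1, x * (1 - x) = u := by
  obtain ⟨x, hx, hxu⟩ := intermediate_value_Icc (by norm_num : (0 : ℝ) ≤ 1 / 2)
    (by fun_prop : Continuous fun x : ℝ => x * (1 - x)).continuousOn
    ⟨by linarith, by linarith⟩
  refine ⟨x, ⟨lt_of_le_of_ne hx.1 ?_, by linarith [hx.2]⟩, hxu⟩
  rintro rfl
  simp [hu.ne] at hxu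

lemma iSup_mul_exp_mul_log_mul_one_sub {C p q : ℝ} (hC : 0 ≤ C) (hp : 0 < p)
    (hpq : 4 * p ≤ q) :
    ⨆ x : Ioo (0 : ℝ) 1, C * exp (p * log (x * (1 - x)) + q * (1 / 4 - x * (1 - x))) =
      C * exp (p * log (p / q) - p + q / 4) := by
  have hq : 0 < q := by linarith
  have hle : ∀ x : Ioo (0 : ℝ) 1,
      C * exp (p * log (x * (1 - x)) + q * (1 / 4 - x * (1 - x))) ≤
        C * exp (p * log (p / q) - p + q / 4) := fun x => by
    have := mul_log_sub_mul_le hp hq (mul_pos x.2.1 (sub_pos.2 x.2.2))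
    exact mul_le_mul_of_nonneg_left (exp_le_exp.2 (by linarith)) hC
  obtain ⟨x, hx, hxu⟩ := exists_mem_Ioo_mul_one_sub_eq (div_pos hp hq)
    ((div_le_iff₀ hq).2 (by linarith))
  have : Nonempty (Ioo (0 : ℝ) 1) := ⟨⟨x, hx⟩⟩
  refine le_antisymm (ciSup_le hle)
    (le_ciSup_of_le ⟨_, forall_mem_range.2 hle⟩ ⟨x, hx⟩ (le_of_eq ?_))
  rw [hxu]
  congr 2
  field_simp
  ring

lemma Rratio_eq {δ a : ℝ} (hδ : -1 ≤ δ) (ha : 1 < a) :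
    Rratio δ a = √(2 * π * (8 * (a + δ))⁻¹) / betaFn a a *
      exp ((a - 1) * log ((a - 1) / (4 * (a + δ))) + (δ + 1)) := by
  have had : 0 < a + δ := by linarith
  have hB := betaFn_self_pos (by linarith : 0 < a)
  have hσ : ((8 * (a + δ)) ^ (-(1 : ℝ) / 2)) ^ 2 = (8 * (a + δ))⁻¹ := by
    rw [← rpow_natCast, ← rpow_mul (by positivity)]
    norm_num [rpow_neg_one]
  have hF : ∀ x : Ioo (0 : ℝ) 1,
      betaSymPDF a x / gaussPDF ((8 * (a + δ)) ^ (-(1 : ℝ) / 2)) x =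
        √(2 * π * (8 * (a + δ))⁻¹) / betaFn a a *
          exp ((a - 1) * log (x * (1 - x)) + 4 * (a + δ) * (1 / 4 - x * (1 - x))) := fun x => by
    rw [betaSymPDF_div_gaussPDF a _ x.2, hσ]
    congr 3
    field_simp
    ring
  rw [Rratio, iSup_congr hF, iSup_mul_exp_mul_log_mul_one_sub (by positivity) (by linarith)
    (by linarith)]
  ring_nf

noncomputable def mulLogRatio (d s : ℝ) : ℝ := s * (log (s + d) - log s)

noncomputable def logGammaHalfDefect (t : ℝ) : ℝ :=
  log (Gamma (t + 1 / 2)) - log (Gamma t) + (t - 1) * log (t - 1) - (t - 1 / 2) * log (t - 1 / 2)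

lemma log_Rratio_eq {δ a : ℝ} (hδ : -1 ≤ δ) (ha : 1 < a) :
    log (Rratio δ a) =
      logGammaHalfDefect a - mulLogRatio (δ + 1 / 2) (a - 1 / 2) + (δ + 1) := by
  have had : 0 < a + δ := by linarith
  have hB := betaFn_self_pos (by linarith : 0 < a)
  have hlog4 : log 4 = 2 * log 2 := by
    rw [show (4 : ℝ) = 2 ^ 2 by norm_num, log_pow, Nat.cast_ofNat]
  have hlog8 : log 8 = 3 * log 2 := by
    rw [show (8 : ℝ) = 2 ^ 3 by norm_num, log_pow, Nat.cast_ofNat]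
  rw [Rratio_eq hδ ha, log_mul (by positivity) (exp_pos _).ne', log_exp,
    log_div (by positivity) hB.ne', log_sqrt (by positivity), log_betaFn_self (by linarith),
    log_mul (by positivity) (by positivity), log_mul two_ne_zero pi_pos.ne', log_inv,
    log_mul (by norm_num) had.ne', log_div (by linarith) (by positivity),
    log_mul (by norm_num) had.ne', hlog4, hlog8, logGammaHalfDefect, mulLogRatio,
    show a - 1 / 2 + (δ + 1 / 2) = a + δ by ring]
  ring


lemma hasDerivAt_mulLogRatio (d : ℝ) {s : ℝ} (hs : 0 < s) (hsd : 0 < s + d) :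
    HasDerivAt (mulLogRatio d) (log (s + d) - log s - d / (s + d)) s := by
  have h := (hasDerivAt_id' s).mul
    ((((hasDerivAt_id' s).add_const d).log hsd.ne').sub ((hasDerivAt_id' s).log hs.ne'))
  refine h.congr_deriv ?_
  simp only [Pi.sub_apply]
  field_simp
  ring

lemma monotoneOn_mulLogRatio (d : ℝ) : MonotoneOn (mulLogRatio d) (Ioi (max 0 (-d))) := by
  have hpos : ∀ s ∈ Ioi (max 0 (-d)), 0 < s ∧ 0 < s + d := fun s hs => by
    have := max_lt_iff.1 (mem_Ioi.1 hs)
    constructor <;> linarith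
  have hderiv : ∀ s ∈ Ioi (max 0 (-d)),
      HasDerivAt (mulLogRatio d) (log (s + d) - log s - d / (s + d)) s :=
    fun s hs => hasDerivAt_mulLogRatio d (hpos s hs).1 (hpos s hs).2
  refine monotoneOn_of_hasDerivWithinAt_nonneg (convex_Ioi _)
    (fun s hs => (hderiv s hs).continuousAt.continuousWithinAt)
    (fun s hs => (hderiv s (interior_subset hs)).hasDerivWithinAt) fun s hs => ?_
  obtain ⟨hs0, hsd⟩ := hpos s (interior_subset hs)
  have h := log_le_sub_one_of_pos (div_pos hs0 hsd)
  rw [log_div hs0.ne' hsd.ne', div_sub_one hsd.ne', show s - (s + d) = -d by ring,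
    neg_div] at h
  linarith

lemma tendsto_mulLogRatio (d : ℝ) : Tendsto (mulLogRatio d) atTop (𝓝 d) := by
  refine (tendsto_mul_log_one_add_div_atTop d).congr' ?_
  filter_upwards [eventually_gt_atTop 0, eventually_gt_atTop (-d)] with s hs hsd
  rw [mulLogRatio, ← log_div (by linarith) hs.ne', add_div, div_self hs.ne']

lemma strictAntiOn_mulLogRatio_one_sub :
    StrictAntiOn (fun t => mulLogRatio 1 (t - 1 / 2) - mulLogRatio 1 (t - 1)) (Ioi 1) := by
  have hderiv : ∀ t ∈ Ioi (1 : ℝ), HasDerivAt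
      (fun t => mulLogRatio 1 (t - 1 / 2) - mulLogRatio 1 (t - 1))
      ((log (t + 1 / 2) - log (t - 1 / 2) - 1 / (t + 1 / 2)) - (log t - log (t - 1) - 1 / t)) t :=
    fun t (ht : 1 < t) => by
      have h := (hasDerivAt_mulLogRatio 1 (s := t - 1 / 2) (by linarith)
        (by linarith)).comp_sub_const.sub
        (hasDerivAt_mulLogRatio 1 (s := t - 1) (by linarith) (by linarith)).comp_sub_const
      rwa [show t - 1 / 2 + 1 = t + 1 / 2 by ring, show t - 1 + 1 = t by ring] at h
  refine strictAntiOn_of_hasDerivWithinAt_neg (convex_Ioi 1)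
    (fun t ht => (hderiv t ht).continuousAt.continuousWithinAt)
    (fun t ht => (hderiv t (interior_subset ht)).hasDerivWithinAt) fun t ht => ?_
  have ht1 : 0 < t - 1 := sub_pos.2 (interior_subset ht)
  have ht0 : 0 < t := by linarith
  have ht2 : 0 < t - 1 / 2 := by linarith
  have hlog := log_le_sub_one_of_pos
    (by positivity : 0 < (t - 1) * (t + 1 / 2) / (t * (t - 1 / 2)))
  rw [log_div (by positivity) (by positivity), log_mul ht1.ne' (by positivity),
    log_mul ht0.ne' ht2.ne'] at hlog
  have key : (t - 1) * (t + 1 / 2) / (t * (t - 1 / 2)) - 1 < 1 / (t + 1 / 2) - 1 / t := by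
    rw [div_sub_one (by positivity), div_sub_div _ _ (by positivity) (by positivity),
      div_lt_div_iff₀ (by positivity) (by positivity)]
    nlinarith
  linarith

lemma log_Gamma_add_one {x : ℝ} (hx : 0 < x) : log (Gamma (x + 1)) = log (Gamma x) + log x := by
  rw [Gamma_add_one hx.ne', log_mul hx.ne' (Gamma_pos_of_pos hx).ne', add_comm]

lemma log_Gamma_add_half_le {x : ℝ} (hx : 0 < x) :
    log (Gamma (x + 1 / 2)) ≤ log (Gamma x) + log x / 2 := by
  have h := convexOn_log_Gamma.2 (mem_Ioi.2 hx) (mem_Ioi.2 (by linarith : 0 < x + 1))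
    (by norm_num : (0 : ℝ) ≤ 1 / 2) (by norm_num : (0 : ℝ) ≤ 1 / 2) (by norm_num)
  simp only [smul_eq_mul, Function.comp_apply, log_Gamma_add_one hx] at h
  rw [show 1 / 2 * x + 1 / 2 * (x + 1) = x + 1 / 2 by ring] at h
  linarith

lemma tendsto_log_Gamma_add_half_sub : Tendsto
    (fun x => log (Gamma (x + 1 / 2)) - log (Gamma x) - log x / 2) atTop (𝓝 0) := by
  have hlow : Tendsto (fun x : ℝ => -((log (x + 1 / 2) - log x) / 2)) atTop (𝓝 0) := by
    simpa using ((tendsto_log_comp_add_sub_log (1 / 2)).div_const 2).neg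
  refine tendsto_of_tendsto_of_tendsto_of_le_of_le' hlow tendsto_const_nhds ?_ ?_ <;>
    filter_upwards [eventually_gt_atTop 0] with x hx
  · have h := log_Gamma_add_half_le (by linarith : 0 < x + 1 / 2)
    rw [show x + 1 / 2 + 1 / 2 = x + 1 by ring, log_Gamma_add_one hx] at h
    linarith
  · linarith [log_Gamma_add_half_le hx]

lemma tendsto_logGammaHalfDefect : Tendsto logGammaHalfDefect atTop (𝓝 (-(1 / 2))) := by
  have hshift : Tendsto (fun t : ℝ => t - 1) atTop atTop :=
    tendsto_atTop_add_const_right _ _ tendsto_id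
  have hhalf : Tendsto (fun t : ℝ => t - 1 / 2) atTop atTop :=
    tendsto_atTop_add_const_right _ _ tendsto_id
  have h := (tendsto_log_Gamma_add_half_sub.sub ((tendsto_mulLogRatio (1 / 2)).comp hshift)).add
    (((tendsto_log_comp_add_sub_log (1 / 2)).comp hhalf).div_const 2)
  rw [zero_sub, zero_div, add_zero] at h
  refine h.congr fun t => ?_
  simp only [Function.comp_apply, logGammaHalfDefect, mulLogRatio,
    show t - 1 + 1 / 2 = t - 1 / 2 by ring, show t - 1 / 2 + 1 / 2 = t by ring]
  ring

lemma logGammaHalfDefect_sub_add_one {t : ℝ} (ht : 0 < t) :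
    logGammaHalfDefect t - logGammaHalfDefect (t + 1) =
      mulLogRatio 1 (t - 1 / 2) - mulLogRatio 1 (t - 1) := by
  rw [logGammaHalfDefect, logGammaHalfDefect, show t + 1 + 1 / 2 = t + 1 / 2 + 1 by ring,
    log_Gamma_add_one (by linarith), log_Gamma_add_one (by linarith), mulLogRatio, mulLogRatio,
    show t - 1 / 2 + 1 = t + 1 / 2 by ring, show t + 1 - 1 / 2 = t + 1 / 2 by ring,
    show t - 1 + 1 = t by ring, show t + 1 - 1 = t by ring]
  ring

lemma strictAntiOn_of_tendsto_of_sub_add_one {f : ℝ → ℝ} {c L : ℝ}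
    (hf : Tendsto f atTop (𝓝 L)) (hdiff : StrictAntiOn (fun t => f t - f (t + 1)) (Ioi c)) :
    StrictAntiOn f (Ioi c) := by
  intro a ha b hb hab
  have hc : ∀ {x : ℝ} (n : ℕ), x ∈ Ioi c → x + n ∈ Ioi c := fun n hx =>
    mem_Ioi.2 (lt_add_of_lt_of_nonneg hx n.cast_nonneg)
  set d : ℕ → ℝ := fun n => f (a + n) - f (b + n)
  have hd : StrictAnti d := strictAnti_nat_of_succ_lt fun n => by
    have := hdiff (hc n ha) (hc n hb) (by linarith)
    simp only [d, Nat.cast_succ, ← add_assoc]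
    linarith
  have hlim : Tendsto d atTop (𝓝 0) := by
    have h := fun x => hf.comp (tendsto_atTop_add_const_left _ x tendsto_natCast_atTop_atTop)
    simpa using (h a).sub (h b)
  have h1 := hd.antitone.le_of_tendsto hlim 1
  have h01 := hd zero_lt_one
  simp only [d, Nat.cast_zero, add_zero] at h01
  linarith

lemma strictAntiOn_logGammaHalfDefect : StrictAntiOn logGammaHalfDefect (Ioi 1) :=
  strictAntiOn_of_tendsto_of_sub_add_one tendsto_logGammaHalfDefect fun a ha b hb hab => by
    simpa only [logGammaHalfDefect_sub_add_one (zero_lt_one.trans ha),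
      logGammaHalfDefect_sub_add_one (zero_lt_one.trans hb)] using
      strictAntiOn_mulLogRatio_one_sub ha hb hab

theorem logR_strictAnti (δ : ℝ) (hδ : -1 ≤ δ) :
    StrictAntiOn (fun a => Real.log (Rratio δ a)) (Set.Ioi (1:ℝ)) := by
  intro a ha b hb hab
  have hmem : ∀ {x : ℝ}, 1 < x → x - 1 / 2 ∈ Ioi (max 0 (-(δ + 1 / 2))) := fun hx =>
    mem_Ioi.2 (max_lt (by linarith) (by linarith))
  have hΦ := strictAntiOn_logGammaHalfDefect ha hb hab
  have hM := monotoneOn_mulLogRatio (δ + 1 / 2) (hmem ha) (hmem hb) (by linarith)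
  simp only [log_Rratio_eq hδ ha, log_Rratio_eq hδ hb]
  linarith
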